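/- Let f be a function of bounded mean oscillation on a cube Q ⊂ ℝ^n with ‖f‖_{BMO} ≤ M, and let Λ > 0. Then for every λ > Λ, |{x ∈ Q : |f(x) - f_Q| > λ - Λ}| ≤ C_1 |Q| exp(−C_2 (λ − Λ)/M), where f_Q is the average of f over Q and C_1, C_2 > 0 depend only on n. Consequently, for 1 < p ≤ 2, ∫_Λ^∞ λ^{p-1} |{x ∈ Q : |f - f_Q| > λ - Λ}| dλ ≤ C(n) |Q| e^{C_2 Λ/M} (M/C_2)^p ∫_{C_2Λ/M}^∞ s^{p-1} e^{-s} ds. -/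

import Mathlib

open MeasureTheory Set Metric Filter
open scoped ENNReal NNReal Topology

noncomputable section

/-- The closed axis-parallel cube with lower corner `c` and side `r`. -/
def cubeC {n : ℕ} (c : EuclideanSpace ℝ (Fin n)) (r : ℝ) : Set (EuclideanSpace ℝ (Fin n)) :=
  {x | ∀ i, c i ≤ x i ∧ x i ≤ c i + r}

/-- The average of `f` over a set `Q`. -/
def avgOn {n : ℕ} (f : EuclideanSpace ℝ (Fin n) → ℝ) (Q : Set (EuclideanSpace ℝ (Fin n))) : ℝ :=
  (volume Q).toReal⁻¹ * ∫ x in Q, f x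

end

namespace JN
noncomputable section

variable {n : ℕ}

local notation "X" => EuclideanSpace ℝ (Fin n)

lemma isClosed_cubeC (c : X) (r : ℝ) : IsClosed (cubeC c r) := by
  have h : cubeC c r = ⋂ i, ((fun x : X => x i) ⁻¹' Icc (c i) (c i + r)) := by
    ext x
    simp only [cubeC, mem_setOf_eq, mem_iInter, mem_preimage, mem_Icc]
  rw [h]
  exact isClosed_iInter fun i =>
    IsClosed.preimage (EuclideanSpace.proj (𝕜 := ℝ) i).continuous isClosed_Icc

lemma measurableSet_cubeC (c : X) (r : ℝ) : MeasurableSet (cubeC c r) :=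
  (isClosed_cubeC c r).measurableSet

lemma cubeC_eq_preimage (c : X) (r : ℝ) :
    cubeC c r = ((MeasurableEquiv.toLp 2 (Fin n → ℝ)).symm) ⁻¹'
      (Set.univ.pi fun i => Icc (c i) (c i + r)) := by
  ext x
  simp only [cubeC, mem_setOf_eq, mem_preimage, Set.mem_pi, mem_univ, forall_true_left, mem_Icc,
    MeasurableEquiv.coe_toLp_symm]

lemma volume_cubeC (c : X) (r : ℝ) :
    volume (cubeC c r) = ENNReal.ofReal r ^ n := by
  rw [cubeC_eq_preimage,
    (EuclideanSpace.volume_preserving_symm_measurableEquiv_toLp (Fin n)).measure_preimage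
      ((MeasurableSet.univ_pi fun i => measurableSet_Icc).nullMeasurableSet)]
  rw [volume_pi_pi]
  simp [Real.volume_Icc]

lemma volume_cubeC_lt_top (c : X) (r : ℝ) : volume (cubeC c r) < ∞ := by
  rw [volume_cubeC]
  exact ENNReal.pow_lt_top ENNReal.ofReal_lt_top

lemma volume_cubeC_pos (c : X) {r : ℝ} (hr : 0 < r) : 0 < volume (cubeC c r) := by
  rw [volume_cubeC]
  exact pos_iff_ne_zero.2 (pow_ne_zero _ (ENNReal.ofReal_pos.2 hr).ne')

lemma volume_cubeC_toReal (c : X) {r : ℝ} (hr : 0 ≤ r) :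
    (volume (cubeC c r)).toReal = r ^ n := by
  rw [volume_cubeC, ← ENNReal.ofReal_pow hr, ENNReal.toReal_ofReal (by positivity)]

lemma volume_hyperplane (hn : 1 ≤ n) (i : Fin n) (a : ℝ) :
    volume {x : X | x i = a} = 0 := by
  have h : {x : X | x i = a} = ((MeasurableEquiv.toLp 2 (Fin n → ℝ)).symm) ⁻¹'
      {y : Fin n → ℝ | y i = a} := by
    ext x
    simp [MeasurableEquiv.coe_toLp_symm]
  have hms : NullMeasurableSet {y : Fin n → ℝ | y i = a} volume :=
    (((measurableSet_singleton a).preimage (measurable_pi_apply i) :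
      MeasurableSet {y : Fin n → ℝ | y i = a})).nullMeasurableSet
  rw [h, (EuclideanSpace.volume_preserving_symm_measurableEquiv_toLp (Fin n)).measure_preimage hms,
    MeasureTheory.volume_pi]
  exact MeasureTheory.Measure.pi_hyperplane (fun _ : Fin n => (volume : MeasureTheory.Measure ℝ)) i a

/-- Corner of the dyadic child of the cube with corner `c` and side `r`, indexed by `ε`. -/
def chCorner (c : X) (r : ℝ) (ε : Fin n → Bool) : X :=
  (WithLp.equiv 2 (Fin n → ℝ)).symm (fun i => c i + if ε i then r / 2 else 0)

@[simp] lemma chCorner_apply (c : X) (r : ℝ) (ε : Fin n → Bool) (i : Fin n) :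
    chCorner c r ε i = c i + if ε i then r / 2 else 0 := rfl

lemma child_subset (c : X) {r : ℝ} (hr : 0 ≤ r) (ε : Fin n → Bool) :
    cubeC (chCorner c r ε) (r / 2) ⊆ cubeC c r := by
  intro x hx i
  have h := hx i
  rw [chCorner_apply] at h
  rcases h with ⟨h1, h2⟩
  by_cases hε : ε i <;> simp [hε] at h1 h2 <;> constructor <;> linarith

lemma mem_child_of_mem {c : X} {r : ℝ} {x : X} (hx : x ∈ cubeC c r) :
    x ∈ cubeC (chCorner c r (fun i => decide (c i + r / 2 ≤ x i))) (r / 2) := by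
  intro i
  have h := hx i
  simp only [chCorner_apply]
  split_ifs with hd <;> rw [decide_eq_true_eq] at hd
  · constructor <;> linarith [h.1, h.2]
  · push_neg at hd
    constructor <;> linarith [h.1, h.2]

lemma children_aedisjoint (hn : 1 ≤ n) (c : X) (r : ℝ) {ε ε' : Fin n → Bool} (h : ε ≠ ε') :
    volume (cubeC (chCorner c r ε) (r / 2) ∩ cubeC (chCorner c r ε') (r / 2)) = 0 := by
  obtain ⟨i, hi⟩ : ∃ i, ε i ≠ ε' i := by
    by_contra hcon
    push_neg at hcon
    exact h (funext hcon)
  have key : ∀ (η η' : Fin n → Bool), η i = false → η' i = true →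
      cubeC (chCorner c r η) (r / 2) ∩ cubeC (chCorner c r η') (r / 2) ⊆
        {x : X | x i = c i + r / 2} := by
    intro η η' hη hη' x hx
    have h1 := (hx.1 i).2
    have h2 := (hx.2 i).1
    simp only [chCorner_apply, hη, hη'] at h1 h2
    norm_num at h1 h2
    show x i = c i + r / 2
    linarith
  rcases Bool.eq_false_or_eq_true (ε i) with hε | hε <;>
    rcases Bool.eq_false_or_eq_true (ε' i) with hε' | hε' <;>
    first
      | exact absurd (hε.trans hε'.symm) hi
      | exact measure_mono_null (key ε ε' hε hε') (volume_hyperplane hn i _)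
      | exact measure_mono_null (fun x hx => key ε' ε hε' hε ⟨hx.2, hx.1⟩)
          (volume_hyperplane hn i _)

/-- Corner of the dyadic subcube of `cubeC c r` with address `l`. -/
def adCorner (c : X) (r : ℝ) : List (Fin n → Bool) → X
  | [] => c
  | ε :: l => adCorner (chCorner c r ε) (r / 2) l

/-- The dyadic subcube of `cubeC c r` with address `l`. -/
def dyadic (c : X) (r : ℝ) (l : List (Fin n → Bool)) : Set X :=
  cubeC (adCorner c r l) (r / 2 ^ l.length)

lemma dyadic_nil (c : X) (r : ℝ) : dyadic c r [] = cubeC c r := by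
  simp [dyadic, adCorner]

lemma measurableSet_dyadic (c : X) (r : ℝ) (l : List (Fin n → Bool)) :
    MeasurableSet (dyadic c r l) := measurableSet_cubeC _ _

lemma dyadic_cons (c : X) (r : ℝ) (ε : Fin n → Bool) (l : List (Fin n → Bool)) :
    dyadic c r (ε :: l) = dyadic (chCorner c r ε) (r / 2) l := by
  have hs : r / 2 ^ (l.length + 1) = (r / 2) / 2 ^ l.length := by
    rw [pow_succ]; ring
  simp only [dyadic, adCorner, List.length_cons, hs]

lemma dyadic_subset (c : X) {r : ℝ} (hr : 0 ≤ r) (l : List (Fin n → Bool)) :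
    dyadic c r l ⊆ cubeC c r := by
  induction l generalizing c r with
  | nil => rw [dyadic_nil]
  | cons ε l ih =>
    rw [dyadic_cons]
    exact (ih (chCorner c r ε) (by positivity)).trans (child_subset c hr ε)

lemma dyadic_prefix (c : X) {r : ℝ} (hr : 0 ≤ r) {l m : List (Fin n → Bool)}
    (h : l <+: m) : dyadic c r m ⊆ dyadic c r l := by
  induction l generalizing c r m with
  | nil => rw [dyadic_nil]; exact dyadic_subset c hr m
  | cons ε l ih =>
    obtain ⟨t, rfl⟩ := h
    rw [List.cons_append, dyadic_cons, dyadic_cons]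
    exact ih (chCorner c r ε) (by positivity) ⟨t, rfl⟩

lemma dyadic_snoc (c : X) (r : ℝ) (l : List (Fin n → Bool)) (ε : Fin n → Bool) :
    dyadic c r (l ++ [ε]) =
      cubeC (chCorner (adCorner c r l) (r / 2 ^ l.length) ε) (r / 2 ^ l.length / 2) := by
  induction l generalizing c r with
  | nil =>
    simp only [List.nil_append, dyadic, adCorner, List.length_cons, List.length_nil, pow_zero,
      pow_one, div_one]
    norm_num
  | cons ε' l ih =>
    rw [List.cons_append, dyadic_cons, ih]
    have h1 : r / 2 / 2 ^ l.length = r / 2 ^ (ε' :: l).length := by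
      rw [List.length_cons, pow_succ']; ring
    rw [h1]
    rfl

/-- The address of `x` in the dyadic decomposition of `cubeC c r`, to depth `k`. -/
def addr (c : X) (r : ℝ) (x : X) : ℕ → List (Fin n → Bool)
  | 0 => []
  | k + 1 =>
    (fun i => decide (c i + r / 2 ≤ x i)) ::
      addr (chCorner c r (fun i => decide (c i + r / 2 ≤ x i))) (r / 2) x k

lemma addr_length (c : X) (r : ℝ) (x : X) : ∀ k, (addr c r x k).length = k := by
  intro k
  induction k generalizing c r with
  | zero => rfl
  | succ k ih => simp [addr, ih]

lemma mem_dyadic_addr {c : X} {r : ℝ} {x : X} (hx : x ∈ cubeC c r) :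
    ∀ k, x ∈ dyadic c r (addr c r x k) := by
  intro k
  induction k generalizing c r with
  | zero => rw [addr, dyadic_nil]; exact hx
  | succ k ih =>
    rw [addr, dyadic_cons]
    exact ih (mem_child_of_mem hx)

lemma addr_take (c : X) (r : ℝ) (x : X) :
    ∀ k j, j ≤ k → (addr c r x k).take j = addr c r x j := by
  intro k
  induction k generalizing c r with
  | zero => intro j hj; interval_cases j; rfl
  | succ k ih =>
    intro j hj
    match j with
    | 0 => rfl
    | j + 1 =>
      rw [addr, List.take_succ_cons, ih _ _ j (Nat.succ_le_succ_iff.mp hj)]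
      rfl


/-! ### Averages -/

lemma avg_le_integral {c : X} {s : ℝ} (hs : 0 < s) {g : X → ℝ} {a : ℝ}
    (h : avgOn g (cubeC c s) ≤ a) :
    ∫ x in cubeC c s, g x ≤ a * (volume (cubeC c s)).toReal := by
  have hvol : 0 < (volume (cubeC c s)).toReal :=
    ENNReal.toReal_pos (volume_cubeC_pos c hs).ne' (volume_cubeC_lt_top c s).ne
  rw [avgOn] at h
  calc ∫ x in cubeC c s, g x
      = ((volume (cubeC c s)).toReal⁻¹ * ∫ x in cubeC c s, g x) * (volume (cubeC c s)).toReal := by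
        field_simp
    _ ≤ a * (volume (cubeC c s)).toReal := by
        apply mul_le_mul_of_nonneg_right h hvol.le

lemma lt_integral_of_lt_avg {c : X} {s : ℝ} (hs : 0 < s) {g : X → ℝ} {a : ℝ}
    (h : a < avgOn g (cubeC c s)) :
    a * (volume (cubeC c s)).toReal ≤ ∫ x in cubeC c s, g x := by
  have hvol : 0 < (volume (cubeC c s)).toReal :=
    ENNReal.toReal_pos (volume_cubeC_pos c hs).ne' (volume_cubeC_lt_top c s).ne
  rw [avgOn] at h
  have := mul_le_mul_of_nonneg_right h.le hvol.le
  calc a * (volume (cubeC c s)).toReal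
      ≤ ((volume (cubeC c s)).toReal⁻¹ * ∫ x in cubeC c s, g x) * (volume (cubeC c s)).toReal :=
        this
    _ = ∫ x in cubeC c s, g x := by field_simp

lemma abs_avg_sub_le (c : X) {s : ℝ} (hs : 0 < s) (f : X → ℝ) (a : ℝ)
    (hf : IntegrableOn f (cubeC c s)) :
    |avgOn f (cubeC c s) - a| ≤ avgOn (fun x => |f x - a|) (cubeC c s) := by
  have hvol : 0 < (volume (cubeC c s)).toReal :=
    ENNReal.toReal_pos (volume_cubeC_pos c hs).ne' (volume_cubeC_lt_top c s).ne
  have hconst : IntegrableOn (fun _ : X => a) (cubeC c s) :=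
    integrableOn_const (volume_cubeC_lt_top c s).ne
  have h1 : avgOn f (cubeC c s) - a
      = (volume (cubeC c s)).toReal⁻¹ * ∫ x in cubeC c s, (f x - a) := by
    rw [integral_sub hf hconst, setIntegral_const, measureReal_def, smul_eq_mul, avgOn, mul_sub,
      inv_mul_cancel_left₀ hvol.ne']
  rw [h1, avgOn, abs_mul, abs_of_nonneg (inv_nonneg.2 hvol.le)]
  apply mul_le_mul_of_nonneg_left _ (inv_nonneg.2 hvol.le)
  calc |∫ x in cubeC c s, (f x - a)| ≤ ∫ x in cubeC c s, |f x - a| := by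
        simpa [Real.norm_eq_abs] using
          norm_integral_le_integral_norm (μ := volume.restrict (cubeC c s)) (fun x => f x - a)
    _ = ∫ x in cubeC c s, (fun x => |f x - a|) x := rfl

lemma avg_le_of_subset {c₁ c₂ : X} {s₁ s₂ : ℝ} (hs₁ : 0 < s₁) (hs₂ : 0 < s₂)
    (hsub : cubeC c₂ s₂ ⊆ cubeC c₁ s₁) (hhalf : s₁ ≤ 2 * s₂) {g : X → ℝ}
    (hg0 : ∀ x, 0 ≤ g x) (hg : IntegrableOn g (cubeC c₁ s₁)) :
    avgOn g (cubeC c₂ s₂) ≤ 2 ^ n * avgOn g (cubeC c₁ s₁) := by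
  have hv₁ : (volume (cubeC c₁ s₁)).toReal = s₁ ^ n := volume_cubeC_toReal _ hs₁.le
  have hv₂ : (volume (cubeC c₂ s₂)).toReal = s₂ ^ n := volume_cubeC_toReal _ hs₂.le
  have hI : ∫ x in cubeC c₂ s₂, g x ≤ ∫ x in cubeC c₁ s₁, g x :=
    setIntegral_mono_set hg (Filter.Eventually.of_forall hg0)
      (HasSubset.Subset.eventuallyLE hsub)
  have hI1 : 0 ≤ ∫ x in cubeC c₁ s₁, g x :=
    setIntegral_nonneg (measurableSet_cubeC _ _) (fun x _ => hg0 x)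
  have key : (s₂ ^ n)⁻¹ ≤ 2 ^ n * (s₁ ^ n)⁻¹ := by
    have h4 : s₁ ^ n ≤ 2 ^ n * s₂ ^ n := by
      calc s₁ ^ n ≤ (2 * s₂) ^ n := pow_le_pow_left₀ hs₁.le hhalf n
        _ = 2 ^ n * s₂ ^ n := mul_pow 2 s₂ n
    rw [← div_eq_mul_inv, le_div_iff₀ (by positivity), inv_mul_eq_div,
      div_le_iff₀ (by positivity)]
    linarith
  rw [avgOn, avgOn, hv₁, hv₂]
  calc (s₂ ^ n)⁻¹ * ∫ x in cubeC c₂ s₂, g x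
      ≤ (s₂ ^ n)⁻¹ * ∫ x in cubeC c₁ s₁, g x := by
        apply mul_le_mul_of_nonneg_left hI (by positivity)
    _ ≤ (2 ^ n * (s₁ ^ n)⁻¹) * ∫ x in cubeC c₁ s₁, g x :=
        mul_le_mul_of_nonneg_right key hI1
    _ = 2 ^ n * ((s₁ ^ n)⁻¹ * ∫ x in cubeC c₁ s₁, g x) := by ring

/-! ### The Vitali family of cubes -/

lemma dist_coord_le (x y : X) (i : Fin n) : dist (x i) (y i) ≤ dist x y := by
  rw [EuclideanSpace.dist_eq]
  exact (Real.le_sqrt dist_nonneg (Finset.sum_nonneg fun j _ => sq_nonneg _)).2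
    (Finset.single_le_sum (f := fun j => dist (x j) (y j) ^ 2)
      (fun j _ => sq_nonneg _) (Finset.mem_univ i))

lemma closedBall_subset_cube (x : X) (ρ : ℝ) :
    closedBall x ρ ⊆
      cubeC ((WithLp.equiv 2 (Fin n → ℝ)).symm (fun i => x i - ρ)) (2 * ρ) := by
  intro y hy i
  rw [mem_closedBall] at hy
  have h2 : |y i - x i| ≤ ρ := by
    rw [← Real.dist_eq]
    exact (dist_coord_le y x i).trans hy
  have h3 := abs_le.1 h2
  simp only [WithLp.equiv_symm_apply, PiLp.toLp_apply]
  constructor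
  · linarith [h3.2]
  · linarith [h3.1]

lemma cube_subset_closedBall {c : X} {s : ℝ} (hs : 0 ≤ s) {x : X} (hx : x ∈ cubeC c s) :
    cubeC c s ⊆ closedBall x (s * Real.sqrt n) := by
  intro y hy
  rw [mem_closedBall, EuclideanSpace.dist_eq]
  have hb : ∀ i, dist (y i) (x i) ^ 2 ≤ s ^ 2 := by
    intro i
    have h1 := hy i
    have h2 := hx i
    rw [Real.dist_eq]
    have habs : |y i - x i| ≤ s := abs_le.2 ⟨by linarith [h1.1, h2.2], by linarith [h1.2, h2.1]⟩
    exact sq_le_sq' (by linarith [abs_nonneg (y i - x i)]) habs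
  calc Real.sqrt (∑ i, dist (y i) (x i) ^ 2)
      ≤ Real.sqrt (∑ _i : Fin n, s ^ 2) := Real.sqrt_le_sqrt (Finset.sum_le_sum fun i _ => hb i)
    _ = Real.sqrt ((n : ℝ) * s ^ 2) := by
        rw [Finset.sum_const, Finset.card_univ, Fintype.card_fin, nsmul_eq_mul]
    _ = s * Real.sqrt n := by
        rw [Real.sqrt_mul (Nat.cast_nonneg n), Real.sqrt_sq hs]; ring

lemma interior_cube_nonempty {c : X} {s : ℝ} (hs : 0 < s) :
    (interior (cubeC c s)).Nonempty := by
  refine ⟨(WithLp.equiv 2 (Fin n → ℝ)).symm (fun i => c i + s / 2), ?_⟩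
  rw [mem_interior]
  refine ⟨⋂ i, ((fun x : X => x i) ⁻¹' Ioo (c i) (c i + s)), ?_, ?_, ?_⟩
  · intro y hy i
    have h := mem_iInter.1 hy i
    exact ⟨h.1.le, h.2.le⟩
  · exact isOpen_iInter_of_finite fun i =>
      IsOpen.preimage (EuclideanSpace.proj (𝕜 := ℝ) i).continuous isOpen_Ioo
  · refine mem_iInter.2 fun i => ?_
    simp only [mem_preimage, mem_Ioo, WithLp.equiv_symm_apply, PiLp.toLp_apply]
    constructor <;> linarith

/-- Vitali constant for cubes in dimension `n`. -/
def vitaliC (n : ℕ) : ℝ≥0 := ((6 * Real.sqrt n) ^ n).toNNReal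

lemma coe_vitaliC' : ((vitaliC n : ℝ≥0) : ℝ≥0∞) = ENNReal.ofReal ((6 * Real.sqrt n) ^ n) := by
  rw [vitaliC, ENNReal.ofReal]

lemma coe_vitaliC : ((vitaliC n : ℝ≥0) : ℝ≥0∞) = ENNReal.ofReal (6 * Real.sqrt n) ^ n := by
  rw [coe_vitaliC', ← ENNReal.ofReal_pow (by positivity)]

lemma ball_doubling (hn : 1 ≤ n) (x : X) :
    ∃ᶠ ρ in 𝓝[>] (0 : ℝ),
      volume (closedBall x (3 * ρ)) ≤ (vitaliC n : ℝ≥0∞) * volume (closedBall x ρ) := by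
  apply Filter.Eventually.frequently
  filter_upwards [self_mem_nhdsWithin] with ρ hρ
  have hρ0 : (0 : ℝ) < ρ := hρ
  have hd : Module.finrank ℝ (EuclideanSpace ℝ (Fin n)) = n := finrank_euclideanSpace_fin
  have hsqrt : (1:ℝ) ≤ Real.sqrt n :=
    (Real.le_sqrt zero_le_one (Nat.cast_nonneg n)).2 (by norm_num; exact_mod_cast hn)
  have h36 : (3:ℝ) ^ n ≤ (6 * Real.sqrt n) ^ n :=
    pow_le_pow_left₀ (by norm_num) (by nlinarith) n
  calc volume (closedBall x (3 * ρ))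
      = ENNReal.ofReal ((3 * ρ) ^ n) * volume (ball (0 : EuclideanSpace ℝ (Fin n)) 1) := by
        rw [Measure.addHaar_closedBall volume x (by linarith : (0:ℝ) ≤ 3 * ρ), hd]
    _ ≤ ((vitaliC n : ℝ≥0∞) * ENNReal.ofReal (ρ ^ n)) *
          volume (ball (0 : EuclideanSpace ℝ (Fin n)) 1) := by
        apply mul_le_mul_left
        rw [mul_pow, ENNReal.ofReal_mul (by positivity), coe_vitaliC']
        apply mul_le_mul_left
        exact ENNReal.ofReal_le_ofReal h36
    _ = (vitaliC n : ℝ≥0∞) * volume (closedBall x ρ) := by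
        rw [Measure.addHaar_closedBall volume x hρ0.le, hd, mul_assoc]

/-- The Vitali family of the Lebesgue measure on `EuclideanSpace ℝ (Fin n)`. -/
def vfam (hn : 1 ≤ n) : VitaliFamily (volume : Measure (EuclideanSpace ℝ (Fin n))) :=
  Vitali.vitaliFamily volume (vitaliC n) (ball_doubling hn)

lemma cube_mem_setsAt (hn : 1 ≤ n) {c : X} {s : ℝ} (hs : 0 < s) {x : X} (hx : x ∈ cubeC c s) :
    cubeC c s ∈ (vfam hn).setsAt x := by
  have hmem : cubeC c s ∈ {a : Set (EuclideanSpace ℝ (Fin n)) | IsClosed a ∧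
      (interior a).Nonempty ∧ ∃ R, a ⊆ closedBall x R ∧
        volume (closedBall x (3 * R)) ≤ (vitaliC n : ℝ≥0∞) * volume a} := by
    refine ⟨isClosed_cubeC c s, interior_cube_nonempty hs, s * Real.sqrt n,
      cube_subset_closedBall hs.le hx, ?_⟩
    calc volume (closedBall x (3 * (s * Real.sqrt n)))
        ≤ volume (cubeC ((WithLp.equiv 2 (Fin n → ℝ)).symm
            (fun i => x i - 3 * (s * Real.sqrt n))) (2 * (3 * (s * Real.sqrt n)))) :=
          measure_mono (closedBall_subset_cube x _)
      _ = ENNReal.ofReal (2 * (3 * (s * Real.sqrt n))) ^ n := volume_cubeC _ _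
      _ = (ENNReal.ofReal (6 * Real.sqrt n) * ENNReal.ofReal s) ^ n := by
          rw [← ENNReal.ofReal_mul (by positivity)]
          congr 2
          ring
      _ = (vitaliC n : ℝ≥0∞) * volume (cubeC c s) := by
          rw [mul_pow, coe_vitaliC, volume_cubeC]
  exact hmem

lemma tendsto_dyadic_filterAt (hn : 1 ≤ n) {c : X} {r : ℝ} (hr : 0 < r) {x : X}
    (hx : x ∈ cubeC c r) :
    Filter.Tendsto (fun k => dyadic c r (addr c r x k)) Filter.atTop ((vfam hn).filterAt x) := by
  rw [VitaliFamily.tendsto_filterAt_iff]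
  have hside : ∀ k : ℕ, (0:ℝ) < r / 2 ^ k := fun k => by positivity
  have hmem := mem_dyadic_addr hx
  have hcube : ∀ k : ℕ, dyadic c r (addr c r x k)
      = cubeC (adCorner c r (addr c r x k)) (r / 2 ^ k) := by
    intro k
    rw [dyadic, addr_length]
  constructor
  · refine Filter.Eventually.of_forall fun k => ?_
    rw [hcube k]
    exact cube_mem_setsAt hn (hside k) (hcube k ▸ hmem k)
  · intro ε hε
    have hten : Filter.Tendsto (fun k : ℕ => (r / 2 ^ k) * Real.sqrt n)
        Filter.atTop (𝓝 0) := by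
      have h1 : Filter.Tendsto (fun k : ℕ => (1/2 : ℝ) ^ k) Filter.atTop (𝓝 0) :=
        tendsto_pow_atTop_nhds_zero_of_lt_one (by norm_num) (by norm_num)
      have h2 := (h1.const_mul r).mul_const (Real.sqrt n)
      simp only [mul_zero, zero_mul] at h2
      convert h2 using 2 with k
      rw [div_eq_mul_inv, ← inv_pow]
      norm_num
    filter_upwards [hten.eventually (gt_mem_nhds hε)] with k hk
    refine subset_trans ?_ (closedBall_subset_closedBall hk.le)
    rw [hcube k]
    exact cube_subset_closedBall (hside k).le (hcube k ▸ hmem k)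



/-! ### Calderón–Zygmund decomposition -/

lemma dyadic_aedisjoint (hn : 1 ≤ n) (c : X) {r : ℝ} (hr : 0 ≤ r)
    {a b : List (Fin n → Bool)} (hab : ¬ a <+: b) (hba : ¬ b <+: a) :
    volume (dyadic c r a ∩ dyadic c r b) = 0 := by
  induction a generalizing b c r with
  | nil => exact absurd (List.nil_prefix) hab
  | cons ε a ih =>
    match b with
    | [] => exact absurd (List.nil_prefix) hba
    | ε' :: b =>
      by_cases hεε : ε = ε'
      · subst hεε
        rw [dyadic_cons, dyadic_cons]
        refine ih (chCorner c r ε) (by positivity) ?_ ?_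
        · exact fun h => hab (List.cons_prefix_cons.2 ⟨rfl, h⟩)
        · exact fun h => hba (List.cons_prefix_cons.2 ⟨rfl, h⟩)
      · refine measure_mono_null (Set.inter_subset_inter ?_ ?_)
          (children_aedisjoint hn c r hεε)
        · rw [dyadic_cons]
          exact dyadic_subset _ (by positivity) _
        · rw [dyadic_cons]
          exact dyadic_subset _ (by positivity) _

lemma CZ (hn : 1 ≤ n) (c₀ : X) {r₀ : ℝ} (hr₀ : 0 < r₀) (g : X → ℝ)
    (hg : IntegrableOn g (cubeC c₀ r₀)) (hg0 : ∀ x, 0 ≤ g x) {M : ℝ} (hM : 0 < M)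
    (havg : avgOn g (cubeC c₀ r₀) ≤ M) :
    ∃ S : Set (List (Fin n → Bool)),
      (∀ l ∈ S, dyadic c₀ r₀ l ⊆ cubeC c₀ r₀) ∧
      (∀ l ∈ S, 2 * M < avgOn g (dyadic c₀ r₀ l) ∧
        avgOn g (dyadic c₀ r₀ l) ≤ 2 ^ n * (2 * M)) ∧
      (∑' l : S, volume (dyadic c₀ r₀ (l : List (Fin n → Bool))))
        ≤ 2⁻¹ * volume (cubeC c₀ r₀) ∧
      (∀ᵐ x, x ∈ cubeC c₀ r₀ \ (⋃ l ∈ S, dyadic c₀ r₀ l) → g x ≤ 2 * M) := by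
  classical
  set bad : List (Fin n → Bool) → Prop :=
    fun l => 2 * M < avgOn g (dyadic c₀ r₀ l) with hbaddef
  set S : Set (List (Fin n → Bool)) :=
    {l | bad l ∧ ∀ j < l.length, ¬ bad (l.take j)} with hSdef
  have hside : ∀ l : List (Fin n → Bool), (0:ℝ) < r₀ / 2 ^ l.length :=
    fun l => by positivity
  have hdy : ∀ l : List (Fin n → Bool),
      dyadic c₀ r₀ l = cubeC (adCorner c₀ r₀ l) (r₀ / 2 ^ l.length) := fun l => rfl
  have hsubQ : ∀ l : List (Fin n → Bool), dyadic c₀ r₀ l ⊆ cubeC c₀ r₀ :=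
    fun l => dyadic_subset c₀ hr₀.le l
  have hintl : ∀ l : List (Fin n → Bool), IntegrableOn g (dyadic c₀ r₀ l) :=
    fun l => hg.mono_set (hsubQ l)
  have hvolQpos := volume_cubeC_pos c₀ hr₀
  have hvolQfin := volume_cubeC_lt_top c₀ r₀
  -- elements of S are not prefixes of each other
  have hnp : ∀ a ∈ S, ∀ b ∈ S, a ≠ b → ¬ a <+: b := by
    intro a ha b hb hne hpre
    have hlen : a.length < b.length := by
      rcases lt_or_eq_of_le hpre.length_le with h | h
      · exact h
      · exact absurd (List.IsPrefix.eq_of_length hpre h) hne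
    have := hb.2 a.length hlen
    rw [← List.prefix_iff_eq_take.1 hpre] at this
    exact this ha.1
  -- pairwise a.e. disjointness
  have hpair : ∀ a ∈ S, ∀ b ∈ S, a ≠ b →
      volume (dyadic c₀ r₀ a ∩ dyadic c₀ r₀ b) = 0 := by
    intro a ha b hb hne
    exact dyadic_aedisjoint hn c₀ hr₀.le (hnp a ha b hb hne)
      (hnp b hb a ha hne.symm)
  refine ⟨S, fun l _ => hsubQ l, ?_, ?_, ?_⟩
  · -- bad level and parent control
    intro l hl
    refine ⟨hl.1, ?_⟩
    have hlne : l ≠ [] := by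
      rintro rfl
      have := hl.1
      rw [hbaddef] at this
      simp only [dyadic_nil] at this
      linarith [lt_of_lt_of_le this havg]
    set p := l.dropLast with hp
    have hplen : p.length = l.length - 1 := List.length_dropLast
    have hlpos : 0 < l.length := List.length_pos_iff.2 hlne
    have hgoodp : ¬ bad p := by
      have := hl.2 (l.length - 1) (by omega)
      rwa [← List.dropLast_eq_take] at this
    have havgp : avgOn g (dyadic c₀ r₀ p) ≤ 2 * M := le_of_not_gt hgoodp
    have hpre : p <+: l := ⟨[l.getLast hlne], List.dropLast_append_getLast hlne⟩
    have hsub : dyadic c₀ r₀ l ⊆ dyadic c₀ r₀ p := dyadic_prefix c₀ hr₀.le hpre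
    have hhalf : r₀ / 2 ^ p.length ≤ 2 * (r₀ / 2 ^ l.length) := by
      have h2 : l.length = p.length + 1 := by omega
      have h3 : 2 * (r₀ / (2 ^ p.length * 2)) = r₀ / 2 ^ p.length := by
        field_simp
      rw [h2, pow_succ, h3]
    calc avgOn g (dyadic c₀ r₀ l)
        ≤ 2 ^ n * avgOn g (dyadic c₀ r₀ p) := by
          rw [hdy l, hdy p]
          exact avg_le_of_subset (hside p) (hside l) hsub hhalf hg0
            (hintl p)
      _ ≤ 2 ^ n * (2 * M) := by
          apply mul_le_mul_of_nonneg_left havgp (by positivity)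
  · -- total mass of selected cubes
    set ν : Measure (EuclideanSpace ℝ (Fin n)) :=
      volume.withDensity (fun x => ENNReal.ofReal (g x)) with hν
    have hνset : ∀ l : List (Fin n → Bool),
        ν (dyadic c₀ r₀ l) = ENNReal.ofReal (∫ x in dyadic c₀ r₀ l, g x) := by
      intro l
      rw [hν, withDensity_apply _ (measurableSet_dyadic c₀ r₀ l),
        ofReal_integral_eq_lintegral_ofReal (hintl l)
          (Filter.Eventually.of_forall hg0)]
    have hνQ : ν (cubeC c₀ r₀) ≤ ENNReal.ofReal M * volume (cubeC c₀ r₀) := by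
      rw [hν, withDensity_apply _ (measurableSet_cubeC _ _),
        ← ofReal_integral_eq_lintegral_ofReal hg (Filter.Eventually.of_forall hg0)]
      calc ENNReal.ofReal (∫ x in cubeC c₀ r₀, g x)
          ≤ ENNReal.ofReal (M * (volume (cubeC c₀ r₀)).toReal) :=
            ENNReal.ofReal_le_ofReal (avg_le_integral hr₀ havg)
        _ = ENNReal.ofReal M * volume (cubeC c₀ r₀) := by
            rw [ENNReal.ofReal_mul hM.le, ENNReal.ofReal_toReal hvolQfin.ne]
    have hlow : ∀ l ∈ S, ENNReal.ofReal (2 * M) * volume (dyadic c₀ r₀ l)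
        ≤ ν (dyadic c₀ r₀ l) := by
      intro l hl
      rw [hνset l]
      have hbadl : 2 * M < avgOn g (cubeC (adCorner c₀ r₀ l) (r₀ / 2 ^ l.length)) := hl.1
      have h1 : 2 * M * (volume (dyadic c₀ r₀ l)).toReal ≤ ∫ x in dyadic c₀ r₀ l, g x :=
        lt_integral_of_lt_avg (hside l) hbadl
      have hofr : ENNReal.ofReal (2 * M * (volume (dyadic c₀ r₀ l)).toReal)
          = ENNReal.ofReal (2 * M) * volume (dyadic c₀ r₀ l) := by
        rw [ENNReal.ofReal_mul (show (0:ℝ) ≤ 2 * M by positivity),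
          ENNReal.ofReal_toReal ((measure_mono (hsubQ l)).trans_lt hvolQfin).ne]
      rw [← hofr]
      exact ENNReal.ofReal_le_ofReal h1
    have hcnt : S.Countable := S.to_countable
    have := hcnt.to_subtype
    have hAED : Pairwise (Function.onFun (AEDisjoint ν) fun l : S => dyadic c₀ r₀ (l : List (Fin n → Bool))) := by
      intro a b hne
      have h0 : volume (dyadic c₀ r₀ (a : List (Fin n → Bool)) ∩ dyadic c₀ r₀ (b : List (Fin n → Bool))) = 0 :=
        hpair a a.2 b b.2 (fun h => hne (Subtype.ext h))
      show ν (dyadic c₀ r₀ (a : List (Fin n → Bool)) ∩ dyadic c₀ r₀ (b : List (Fin n → Bool))) = 0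
      rw [hν, withDensity_apply _
        ((measurableSet_dyadic c₀ r₀ _).inter (measurableSet_dyadic c₀ r₀ _))]
      exact setLIntegral_measure_zero _ _ h0
    have hνmeas : ∀ l : S, NullMeasurableSet (dyadic c₀ r₀ (l : List (Fin n → Bool))) ν :=
      fun l => (measurableSet_dyadic c₀ r₀ _).nullMeasurableSet
    have hchain : ENNReal.ofReal (2 * M) * (∑' l : S, volume (dyadic c₀ r₀ (l : List (Fin n → Bool))))
        ≤ ENNReal.ofReal M * volume (cubeC c₀ r₀) := by
      rw [← ENNReal.tsum_mul_left]
      calc ∑' l : S, ENNReal.ofReal (2 * M) * volume (dyadic c₀ r₀ (l : List (Fin n → Bool)))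
          ≤ ∑' l : S, ν (dyadic c₀ r₀ (l : List (Fin n → Bool))) :=
            ENNReal.tsum_le_tsum (fun l => hlow l l.2)
        _ = ν (⋃ l : S, dyadic c₀ r₀ (l : List (Fin n → Bool))) :=
            (measure_iUnion₀ hAED hνmeas).symm
        _ ≤ ν (cubeC c₀ r₀) := measure_mono (Set.iUnion_subset fun l => hsubQ _)
        _ ≤ ENNReal.ofReal M * volume (cubeC c₀ r₀) := hνQ
    have h2M0 : ENNReal.ofReal (2 * M) ≠ 0 := by
      simp only [ne_eq, ENNReal.ofReal_eq_zero, not_le]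
      linarith
    have h2Mtop : ENNReal.ofReal (2 * M) ≠ ∞ := ENNReal.ofReal_ne_top
    rw [← ENNReal.mul_le_mul_iff_right h2M0 h2Mtop]
    refine hchain.trans (le_of_eq ?_)
    rw [ENNReal.ofReal_mul (by norm_num : (0:ℝ) ≤ 2)]
    have : (ENNReal.ofReal 2) = 2 := by norm_num
    rw [this]
    calc ENNReal.ofReal M * volume (cubeC c₀ r₀)
        = (2 * 2⁻¹) * (ENNReal.ofReal M * volume (cubeC c₀ r₀)) := by
          rw [ENNReal.mul_inv_cancel (by norm_num) (by norm_num), one_mul]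
      _ = 2 * ENNReal.ofReal M * (2⁻¹ * volume (cubeC c₀ r₀)) := by ring
  · -- a.e. bound off the selected cubes
    have hind : Integrable ((cubeC c₀ r₀).indicator g) volume :=
      (integrable_indicator_iff (measurableSet_cubeC c₀ r₀)).2 hg
    filter_upwards [(vfam hn).ae_tendsto_average hind.locallyIntegrable] with x hx hxmem
    obtain ⟨hxQ, hxU⟩ := hxmem
    have hgood : ∀ k, ¬ bad (addr c₀ r₀ x k) := by
      by_contra hcon
      push_neg at hcon
      have hex : ∃ k, bad (addr c₀ r₀ x k) := hcon
      set k₀ := Nat.find hex with hk₀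
      have hmemS : addr c₀ r₀ x k₀ ∈ S := by
        refine ⟨Nat.find_spec hex, ?_⟩
        intro j hj
        rw [addr_length] at hj
        rw [addr_take c₀ r₀ x k₀ j hj.le]
        exact Nat.find_min hex hj
      exact hxU (Set.mem_biUnion hmemS (mem_dyadic_addr hxQ k₀))
    have hcub : ∀ k, ⨍ y in dyadic c₀ r₀ (addr c₀ r₀ x k), (cubeC c₀ r₀).indicator g y ≤ 2 * M := by
      intro k
      have hle : avgOn g (dyadic c₀ r₀ (addr c₀ r₀ x k)) ≤ 2 * M := le_of_not_gt (hgood k)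
      rw [setAverage_eq]
      have heq : ∫ y in dyadic c₀ r₀ (addr c₀ r₀ x k), (cubeC c₀ r₀).indicator g y
          = ∫ y in dyadic c₀ r₀ (addr c₀ r₀ x k), g y := by
        refine setIntegral_congr_fun (measurableSet_dyadic c₀ r₀ _) (fun y hy => ?_)
        exact Set.indicator_of_mem (hsubQ _ hy) g
      rw [heq, smul_eq_mul]
      exact hle
    have htend : Filter.Tendsto (fun k => ⨍ y in dyadic c₀ r₀ (addr c₀ r₀ x k),
        (cubeC c₀ r₀).indicator g y) Filter.atTop (𝓝 ((cubeC c₀ r₀).indicator g x)) :=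
      hx.comp (tendsto_dyadic_filterAt hn hr₀ hxQ)
    have hfinal : (cubeC c₀ r₀).indicator g x ≤ 2 * M :=
      le_of_tendsto htend (Filter.Eventually.of_forall hcub)
    rwa [Set.indicator_of_mem hxQ] at hfinal



/-! ### Iteration of the CZ decomposition -/

lemma iterate (hn : 1 ≤ n) (c : X) {r : ℝ} (hr : 0 < r) (f : X → ℝ)
    (hf : IntegrableOn f (cubeC c r)) {M : ℝ} (hM : 0 < M)
    (hBMO : ∀ (c' : X) (r' : ℝ), 0 < r' → cubeC c' r' ⊆ cubeC c r →
      avgOn (fun x => |f x - avgOn f (cubeC c' r')|) (cubeC c' r') ≤ M)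
    (k : ℕ) :
    ∀ (c' : X) (r' : ℝ), 0 < r' → cubeC c' r' ⊆ cubeC c r →
      volume {x ∈ cubeC c' r' |
          ((2:ℝ) ^ (n+1) + 2) * M * k < |f x - avgOn f (cubeC c' r')|}
        ≤ 2⁻¹ ^ k * volume (cubeC c' r') := by
  induction k with
  | zero =>
    intro c' r' hr' hsub
    simp only [pow_zero, one_mul]
    exact measure_mono (Set.sep_subset _ _)
  | succ k ih =>
    intro c' r' hr' hsub
    have hf' : IntegrableOn f (cubeC c' r') := hf.mono_set hsub
    set A : ℝ := avgOn f (cubeC c' r') with hA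
    set g : X → ℝ := fun x => |f x - A| with hgdef
    have hgInt : IntegrableOn g (cubeC c' r') :=
      (hf'.sub (integrableOn_const (volume_cubeC_lt_top c' r').ne)).abs
    have hg0 : ∀ x, 0 ≤ g x := fun x => abs_nonneg _
    have havg : avgOn g (cubeC c' r') ≤ M := hBMO c' r' hr' hsub
    obtain ⟨S, hSsub, hSbad, hSsum, hSae⟩ := CZ hn c' hr' g hgInt hg0 hM havg
    have hside : ∀ l : List (Fin n → Bool), (0:ℝ) < r' / 2 ^ l.length :=
      fun l => by positivity
    set δ : ℝ := ((2:ℝ) ^ (n+1) + 2) * M with hδdef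
    have hδpos : 0 < δ := by rw [hδdef]; positivity
    have h2n1 : (2:ℝ) ≤ 2 ^ (n+1) := by
      calc (2:ℝ) = 2 ^ 1 := (pow_one 2).symm
        _ ≤ 2 ^ (n+1) := pow_le_pow_right₀ (by norm_num) (by omega)
    set U := ⋃ l ∈ S, dyadic c' r' l with hU
    set E := {x ∈ cubeC c' r' | δ * ((k:ℝ)+1) < g x} with hE
    have key : volume E ≤ 2⁻¹ ^ (k+1) * volume (cubeC c' r') := by
      have hsplit : volume E ≤ volume (E \ U) + volume (E ∩ U) := by
        conv_lhs => rw [← Set.diff_union_inter E U]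
        exact measure_union_le _ _
      have hnull : volume (E \ U) = 0 := by
        refine measure_mono_null ?_ (ae_iff.1 hSae)
        intro x hx
        simp only [Set.mem_setOf_eq]
        intro himp
        have hgle := himp ⟨hx.1.1, hx.2⟩
        have hk0 : (0:ℝ) ≤ (k:ℝ) := Nat.cast_nonneg k
        have hgx := hx.1.2
        rw [hδdef] at hgx
        nlinarith
      have hcnt : S.Countable := S.to_countable
      have hperc : ∀ l ∈ S, volume (E ∩ dyadic c' r' l)
          ≤ 2⁻¹ ^ k * volume (dyadic c' r' l) := by
        intro l hl
        set B : ℝ := avgOn f (cubeC (adCorner c' r' l) (r' / 2 ^ l.length)) with hB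
        have hBA : |B - A| ≤ avgOn g (cubeC (adCorner c' r' l) (r' / 2 ^ l.length)) :=
          abs_avg_sub_le (adCorner c' r' l) (hside l) f A (hf'.mono_set (hSsub l hl))
        have hbound := (hSbad l hl).2
        have hBA2 : |B - A| ≤ 2 ^ (n+1) * M := by
          have h2 : (2:ℝ) ^ n * (2 * M) = 2 ^ (n+1) * M := by rw [pow_succ]; ring
          calc |B - A| ≤ avgOn g (dyadic c' r' l) := hBA
            _ ≤ 2 ^ n * (2 * M) := hbound
            _ = 2 ^ (n+1) * M := h2
        have hsub3 : E ∩ dyadic c' r' l ⊆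
            {x ∈ cubeC (adCorner c' r' l) (r' / 2 ^ l.length) | δ * (k:ℝ) < |f x - B|} := by
          intro x hx
          refine ⟨hx.2, ?_⟩
          have htri2 := abs_sub_le (f x) B A
          have hgx := hx.1.2
          have hgxg : δ * ((k:ℝ)+1) < |f x - A| := hgx
          have hδk : δ * ((k:ℝ)+1) = δ * (k:ℝ) + δ := by ring
          have hδval : δ = 2 ^ (n+1) * M + 2 * M := by rw [hδdef]; ring
          linarith
        calc volume (E ∩ dyadic c' r' l)
            ≤ volume {x ∈ cubeC (adCorner c' r' l) (r' / 2 ^ l.length) |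
                δ * (k:ℝ) < |f x - B|} := measure_mono hsub3
          _ ≤ 2⁻¹ ^ k * volume (cubeC (adCorner c' r' l) (r' / 2 ^ l.length)) := by
              have := ih (adCorner c' r' l) (r' / 2 ^ l.length) (hside l)
                ((dyadic_subset c' hr'.le l).trans hsub)
              exact this
          _ = 2⁻¹ ^ k * volume (dyadic c' r' l) := rfl
      have hsecond : volume (E ∩ U) ≤ 2⁻¹ ^ (k+1) * volume (cubeC c' r') := by
        have h1 : E ∩ U ⊆ ⋃ l ∈ S, (E ∩ dyadic c' r' l) := by
          intro x hx
          rcases Set.mem_iUnion₂.1 hx.2 with ⟨l, hlS, hxl⟩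
          exact Set.mem_iUnion₂.2 ⟨l, hlS, ⟨hx.1, hxl⟩⟩
        calc volume (E ∩ U)
            ≤ ∑' l : S, volume (E ∩ dyadic c' r' (l : List (Fin n → Bool))) :=
              (measure_mono h1).trans (measure_biUnion_le volume hcnt _)
          _ ≤ ∑' l : S, 2⁻¹ ^ k * volume (dyadic c' r' (l : List (Fin n → Bool))) :=
              ENNReal.tsum_le_tsum fun l => hperc l l.2
          _ = 2⁻¹ ^ k * ∑' l : S, volume (dyadic c' r' (l : List (Fin n → Bool))) :=
              ENNReal.tsum_mul_left
          _ ≤ 2⁻¹ ^ k * (2⁻¹ * volume (cubeC c' r')) := mul_le_mul_right hSsum _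
          _ = 2⁻¹ ^ (k+1) * volume (cubeC c' r') := by rw [pow_succ]; ring
      calc volume E ≤ volume (E \ U) + volume (E ∩ U) := hsplit
        _ = volume (E ∩ U) := by rw [hnull, zero_add]
        _ ≤ 2⁻¹ ^ (k+1) * volume (cubeC c' r') := hsecond
    have hseteq : {x ∈ cubeC c' r' |
        δ * ((k+1 : ℕ) : ℝ) < |f x - A|} = E := by
      ext x
      constructor
      · intro hx
        refine ⟨hx.1, ?_⟩
        have := hx.2
        push_cast at this
        exact this
      · intro hx
        refine ⟨hx.1, ?_⟩
        have := hx.2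
        push_cast
        exact this
    rw [hseteq]
    exact key

/-- John–Nirenberg: exponential decay of the distribution function. -/
lemma part1 (hn : 1 ≤ n) (c : X) {r : ℝ} (hr : 0 < r) (f : X → ℝ)
    (hf : IntegrableOn f (cubeC c r)) {M : ℝ} (hM : 0 < M)
    (hBMO : ∀ (c' : X) (r' : ℝ), 0 < r' → cubeC c' r' ⊆ cubeC c r →
      avgOn (fun x => |f x - avgOn f (cubeC c' r')|) (cubeC c' r') ≤ M)
    {s : ℝ} (hs : 0 < s) :
    (volume {x ∈ cubeC c r | s < |f x - avgOn f (cubeC c r)|}).toReal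
      ≤ 2 * (volume (cubeC c r)).toReal *
        Real.exp (-(Real.log 2 / ((2:ℝ) ^ (n+1) + 2)) * s / M) := by
  set δ : ℝ := ((2:ℝ) ^ (n+1) + 2) * M with hδdef
  have hδpos : 0 < δ := by rw [hδdef]; positivity
  set k := Nat.floor (s / δ) with hk
  have hk1 : (k:ℝ) * δ ≤ s := by
    rw [hk]
    calc ((Nat.floor (s/δ) : ℕ) : ℝ) * δ ≤ (s/δ) * δ :=
        mul_le_mul_of_nonneg_right (Nat.floor_le (by positivity)) hδpos.le
      _ = s := by field_simp
  have hk2 : s / δ < (k:ℝ) + 1 := Nat.lt_floor_add_one _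
  have hmono : {x ∈ cubeC c r | s < |f x - avgOn f (cubeC c r)|} ⊆
      {x ∈ cubeC c r | δ * (k:ℝ) < |f x - avgOn f (cubeC c r)|} := by
    intro x hx
    refine ⟨hx.1, ?_⟩
    have := hx.2
    nlinarith
  have hiter := iterate hn c hr f hf hM hBMO k c r hr Set.Subset.rfl
  have hEq : ((2:ℝ) ^ (n+1) + 2) * M * (k:ℝ) = δ * (k:ℝ) := by rw [hδdef]
  rw [hEq] at hiter
  have hvol := volume_cubeC_lt_top c r
  have hev : volume {x ∈ cubeC c r | s < |f x - avgOn f (cubeC c r)|}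
      ≤ 2⁻¹ ^ k * volume (cubeC c r) := (measure_mono hmono).trans hiter
  have htoReal : (volume {x ∈ cubeC c r | s < |f x - avgOn f (cubeC c r)|}).toReal
      ≤ (1/2:ℝ) ^ k * (volume (cubeC c r)).toReal := by
    have hrhs : ((2⁻¹ : ℝ≥0∞) ^ k * volume (cubeC c r)).toReal
        = (1/2:ℝ) ^ k * (volume (cubeC c r)).toReal := by
      rw [ENNReal.toReal_mul, ENNReal.toReal_pow]
      norm_num
    rw [← hrhs]
    refine ENNReal.toReal_mono ?_ hev
    exact ENNReal.mul_ne_top (ENNReal.pow_ne_top (by norm_num)) hvol.ne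
  refine htoReal.trans ?_
  have hVnn : 0 ≤ (volume (cubeC c r)).toReal := ENNReal.toReal_nonneg
  have hlog2 : (0:ℝ) < Real.log 2 := Real.log_pos (by norm_num)
  have hlog : ((1:ℝ)/2) ^ k = Real.exp (-(Real.log 2) * (k:ℝ)) := by
    have h12 : ((1:ℝ)/2) = Real.exp (-(Real.log 2)) := by
      rw [Real.exp_neg, Real.exp_log (by norm_num : (0:ℝ) < 2)]
      norm_num
    rw [h12, ← Real.exp_nat_mul]
    congr 1
    ring
  have hexp : ((1:ℝ)/2) ^ k ≤ 2 * Real.exp (-(Real.log 2) * (s/δ)) := by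
    have harg : -(Real.log 2) * (k:ℝ) ≤ Real.log 2 + (-(Real.log 2) * (s/δ)) := by
      nlinarith
    calc ((1:ℝ)/2) ^ k = Real.exp (-(Real.log 2) * (k:ℝ)) := hlog
      _ ≤ Real.exp (Real.log 2 + (-(Real.log 2) * (s/δ))) := Real.exp_le_exp.2 harg
      _ = 2 * Real.exp (-(Real.log 2) * (s/δ)) := by
          rw [Real.exp_add, Real.exp_log (by norm_num : (0:ℝ) < 2)]
  have hargeq : -(Real.log 2) * (s/δ) = -(Real.log 2 / ((2:ℝ) ^ (n+1) + 2)) * s / M := by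
    rw [hδdef]
    have h1 : ((2:ℝ) ^ (n+1) + 2) ≠ 0 := by positivity
    field_simp
  calc (1/2:ℝ) ^ k * (volume (cubeC c r)).toReal
      ≤ (2 * Real.exp (-(Real.log 2) * (s/δ))) * (volume (cubeC c r)).toReal :=
        mul_le_mul_of_nonneg_right hexp hVnn
    _ = 2 * (volume (cubeC c r)).toReal *
          Real.exp (-(Real.log 2 / ((2:ℝ) ^ (n+1) + 2)) * s / M) := by
        rw [hargeq]; ring

end
end JN

/-- The John–Nirenberg inequality on a cube, together with the resulting bound on the
distribution-function integral `∫_Λ^∞ λ^{p-1} |{|f - f_Q| > λ - Λ}| dλ`. -/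
theorem john_nirenberg_and_consequence (n : ℕ) (hn : 1 ≤ n) :
    ∃ C₁ C₂ C₃ : ℝ, 0 < C₁ ∧ 0 < C₂ ∧ 0 < C₃ ∧
    ∀ (c : EuclideanSpace ℝ (Fin n)) (r : ℝ), 0 < r →
    ∀ f : EuclideanSpace ℝ (Fin n) → ℝ, IntegrableOn f (cubeC c r) →
    ∀ M : ℝ, 0 < M →
    (∀ (c' : EuclideanSpace ℝ (Fin n)) (r' : ℝ), 0 < r' → cubeC c' r' ⊆ cubeC c r →
      avgOn (fun x => |f x - avgOn f (cubeC c' r')|) (cubeC c' r') ≤ M) →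
    ∀ Λ : ℝ, 0 < Λ →
      ((∀ t : ℝ, Λ < t →
        (volume {x ∈ cubeC c r | t - Λ < |f x - avgOn f (cubeC c r)|}).toReal ≤
          C₁ * (volume (cubeC c r)).toReal * Real.exp (-C₂ * (t - Λ) / M)) ∧
      ∀ p : ℝ, 1 < p → p ≤ 2 →
        (∫ t in Set.Ioi Λ, t ^ (p - 1) *
            (volume {x ∈ cubeC c r | t - Λ < |f x - avgOn f (cubeC c r)|}).toReal)
          ≤ C₃ * (volume (cubeC c r)).toReal * Real.exp (C₂ * Λ / M) * (M / C₂) ^ p *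
              ∫ s in Set.Ioi (C₂ * Λ / M), s ^ (p - 1) * Real.exp (-s)) := by
  have hlog2 : (0:ℝ) < Real.log 2 := Real.log_pos (by norm_num)
  refine ⟨2, Real.log 2 / ((2:ℝ) ^ (n+1) + 2), 2, by norm_num, by positivity, by norm_num, ?_⟩
  intro c r hr f hf M hM hBMO Λ hΛ
  have hpart1 : ∀ t : ℝ, Λ < t →
      (volume {x ∈ cubeC c r | t - Λ < |f x - avgOn f (cubeC c r)|}).toReal ≤
        2 * (volume (cubeC c r)).toReal *
          Real.exp (-(Real.log 2 / ((2:ℝ) ^ (n+1) + 2)) * (t - Λ) / M) :=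
    fun t ht => JN.part1 hn c hr f hf hM hBMO (by linarith : (0:ℝ) < t - Λ)
  constructor
  · intro t ht
    have := hpart1 t ht
    calc (volume {x ∈ cubeC c r | t - Λ < |f x - avgOn f (cubeC c r)|}).toReal
        ≤ 2 * (volume (cubeC c r)).toReal *
            Real.exp (-(Real.log 2 / ((2:ℝ) ^ (n+1) + 2)) * (t - Λ) / M) := this
      _ = 2 * (volume (cubeC c r)).toReal *
            Real.exp (-(Real.log 2 / ((2:ℝ) ^ (n+1) + 2)) * (t - Λ) / M) := rfl
  · intro p hp1 hp2
    set C₂ : ℝ := Real.log 2 / ((2:ℝ) ^ (n+1) + 2) with hC₂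
    have hC₂pos : 0 < C₂ := by rw [hC₂]; positivity
    set V : ℝ := (volume (cubeC c r)).toReal with hV
    have hVnn : 0 ≤ V := ENNReal.toReal_nonneg
    set b : ℝ := C₂ / M with hb
    have hbpos : 0 < b := div_pos hC₂pos hM
    set m : ℝ → ℝ :=
      fun t => (volume {x ∈ cubeC c r | t - Λ < |f x - avgOn f (cubeC c r)|}).toReal with hm
    have hm0 : ∀ t, 0 ≤ m t := fun t => ENNReal.toReal_nonneg
    have hmanti : Antitone m := by
      intro t₁ t₂ h12
      refine ENNReal.toReal_mono
        (((measure_mono (Set.sep_subset _ _)).trans_lt (JN.volume_cubeC_lt_top c r)).ne) ?_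
      refine measure_mono fun x hx => ⟨hx.1, ?_⟩
      have := hx.2
      linarith
    have hmmeas : Measurable m := hmanti.measurable
    -- pointwise bound
    have hpt : ∀ t ∈ Set.Ioi Λ, t ^ (p-1) * m t ≤
        2 * V * Real.exp (C₂ * Λ / M) * (t ^ (p-1) * Real.exp (-(b * t))) := by
      intro t ht
      have htΛ : Λ < t := ht
      have ht0 : 0 < t := lt_trans hΛ htΛ
      have hmt := hpart1 t htΛ
      have hexpsplit : Real.exp (-C₂ * (t - Λ) / M)
          = Real.exp (C₂ * Λ / M) * Real.exp (-(b * t)) := by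
        rw [← Real.exp_add]
        congr 1
        rw [hb]
        field_simp
        ring
      have hrw : 2 * V * Real.exp (-C₂ * (t - Λ) / M)
          = 2 * V * Real.exp (C₂ * Λ / M) * Real.exp (-(b * t)) := by
        rw [hexpsplit]; ring
      calc t ^ (p-1) * m t
          ≤ t ^ (p-1) * (2 * V * Real.exp (-C₂ * (t - Λ) / M)) := by
            refine mul_le_mul_of_nonneg_left ?_ (Real.rpow_nonneg ht0.le _)
            exact hmt
        _ = 2 * V * Real.exp (C₂ * Λ / M) * (t ^ (p-1) * Real.exp (-(b * t))) := by
            rw [hrw]; ring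
    -- integrability of the comparison function
    have hGamma : IntegrableOn (fun x : ℝ => Real.exp (-x) * x ^ (p-1)) (Set.Ioi 0) :=
      Real.GammaIntegral_convergent (by linarith : (0:ℝ) < p)
    have hbase : IntegrableOn (fun u : ℝ => u ^ (p-1) * Real.exp (-u)) (Set.Ioi (b * Λ)) := by
      refine ((hGamma.mono_set (Set.Ioi_subset_Ioi (by positivity))).congr_fun
        (fun x _ => mul_comm _ _) measurableSet_Ioi)
    have hg' : IntegrableOn (fun u : ℝ => (b⁻¹ * u) ^ (p-1) * Real.exp (-u))
        (Set.Ioi (b * Λ)) := by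
      have heq : Set.EqOn (fun u : ℝ => (b⁻¹) ^ (p-1) * (u ^ (p-1) * Real.exp (-u)))
          (fun u : ℝ => (b⁻¹ * u) ^ (p-1) * Real.exp (-u)) (Set.Ioi (b * Λ)) := by
        intro u hu
        have hu0 : (0:ℝ) ≤ u := le_of_lt (lt_of_le_of_lt (by positivity) hu)
        simp only
        rw [Real.mul_rpow (by positivity) hu0]
        ring
      exact IntegrableOn.congr_fun (hbase.const_mul _) heq measurableSet_Ioi
    have hψint : IntegrableOn (fun t : ℝ => t ^ (p-1) * Real.exp (-(b * t))) (Set.Ioi Λ) := by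
      have hcomp : IntegrableOn
          (fun t : ℝ => (fun u : ℝ => (b⁻¹ * u) ^ (p-1) * Real.exp (-u)) (b * t))
          (Set.Ioi Λ) :=
        (integrableOn_Ioi_comp_mul_left_iff
          (fun u : ℝ => (b⁻¹ * u) ^ (p-1) * Real.exp (-u)) Λ hbpos).2 hg'
      refine IntegrableOn.congr_fun hcomp (fun t _ => ?_) measurableSet_Ioi
      simp only
      rw [inv_mul_cancel_left₀ hbpos.ne']
    have hψint' : IntegrableOn
        (fun t : ℝ => 2 * V * Real.exp (C₂ * Λ / M) * (t ^ (p-1) * Real.exp (-(b * t))))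
        (Set.Ioi Λ) := hψint.const_mul _
    -- integrability of the integrand
    have hφmeas : AEStronglyMeasurable (fun t : ℝ => t ^ (p-1) * m t)
        (volume.restrict (Set.Ioi Λ)) :=
      (((Real.continuous_rpow_const (by linarith : (0:ℝ) ≤ p - 1)).measurable).mul
        hmmeas).aestronglyMeasurable
    have hφint : IntegrableOn (fun t : ℝ => t ^ (p-1) * m t) (Set.Ioi Λ) := by
      refine hψint'.integrable.mono' hφmeas ?_
      filter_upwards [MeasureTheory.ae_restrict_mem measurableSet_Ioi] with t ht
      have ht0 : 0 < t := lt_trans hΛ ht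
      rw [Real.norm_eq_abs, abs_of_nonneg (mul_nonneg (Real.rpow_nonneg ht0.le _) (hm0 t))]
      exact hpt t ht
    -- the integral inequality
    have hle : (∫ t in Set.Ioi Λ, t ^ (p-1) * m t)
        ≤ ∫ t in Set.Ioi Λ,
            2 * V * Real.exp (C₂ * Λ / M) * (t ^ (p-1) * Real.exp (-(b * t))) :=
      setIntegral_mono_on hφint hψint' measurableSet_Ioi hpt
    -- change of variables
    have hchange : (∫ t in Set.Ioi Λ, t ^ (p-1) * Real.exp (-(b * t)))
        = (M / C₂) ^ p * ∫ u in Set.Ioi (C₂ * Λ / M), u ^ (p-1) * Real.exp (-u) := by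
      have h1 : ∀ t : ℝ, t ^ (p-1) * Real.exp (-(b * t))
          = (fun u : ℝ => (b⁻¹ * u) ^ (p-1) * Real.exp (-u)) (b * t) := by
        intro t
        simp only
        rw [inv_mul_cancel_left₀ hbpos.ne']
      rw [setIntegral_congr_fun measurableSet_Ioi (fun t _ => h1 t),
        MeasureTheory.integral_comp_mul_left_Ioi
          (fun u : ℝ => (b⁻¹ * u) ^ (p-1) * Real.exp (-u)) Λ hbpos]
      have h2 : (∫ u in Set.Ioi (b * Λ), (b⁻¹ * u) ^ (p-1) * Real.exp (-u))
          = (b⁻¹) ^ (p-1) * ∫ u in Set.Ioi (b * Λ), u ^ (p-1) * Real.exp (-u) := by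
        rw [← MeasureTheory.integral_const_mul]
        refine setIntegral_congr_fun measurableSet_Ioi (fun u hu => ?_)
        have hu0 : (0:ℝ) ≤ u := le_of_lt (lt_of_le_of_lt (by positivity) hu)
        rw [Real.mul_rpow (by positivity) hu0]
        ring
      rw [h2, smul_eq_mul]
      have hbΛ : b * Λ = C₂ * Λ / M := by rw [hb]; ring
      rw [hbΛ, ← mul_assoc]
      congr 1
      have hbinv : b⁻¹ = M / C₂ := by rw [hb, inv_div]
      rw [hbinv]
      have hMC : (0:ℝ) < M / C₂ := by positivity
      have hps : (M / C₂) ^ p = (M / C₂) ^ ((1:ℝ) + (p-1)) := by norm_num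
      rw [hps, Real.rpow_add hMC, Real.rpow_one]
    calc (∫ t in Set.Ioi Λ, t ^ (p-1) * m t)
        ≤ ∫ t in Set.Ioi Λ,
            2 * V * Real.exp (C₂ * Λ / M) * (t ^ (p-1) * Real.exp (-(b * t))) := hle
      _ = 2 * V * Real.exp (C₂ * Λ / M)
            * ∫ t in Set.Ioi Λ, t ^ (p-1) * Real.exp (-(b * t)) :=
          MeasureTheory.integral_const_mul _ _
      _ = 2 * V * Real.exp (C₂ * Λ / M)
            * ((M / C₂) ^ p * ∫ u in Set.Ioi (C₂ * Λ / M), u ^ (p-1) * Real.exp (-u)) := by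
          rw [hchange]
      _ = 2 * V * Real.exp (C₂ * Λ / M) * (M / C₂) ^ p
            * ∫ u in Set.Ioi (C₂ * Λ / M), u ^ (p-1) * Real.exp (-u) := by ring
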